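/- arXiv:2004.11103 — 2 statements merged into one kernel-verified Lean document; each statement's English description precedes it below -/
import Mathlib

section
/- Let d ≥ 2, ω = exp(2πi/d), Z the generalized Pauli-Z on ℂ^d, |J⟩ the uniform superposition, and A₀ = ω^{−1/4} Z(I − (1−i)|J⟩⟨J|). Then A₀ is unitary, A₀^d = I, and for every 1 ≤ k ≤ d, A₀^k = ω^{−k/4} Z^k (I − (1−i)∑_{ℓ=0}^{k−1} Z^{−ℓ}|J⟩⟨J|Z^{ℓ}). -/
open Complex Matrix Finset
open scoped Real

/-!
Put `Q = (1 - i)|J⟩⟨J|`. Since `⟨J|Z^m|J⟩ = 0` for `0 < m < d`, all cross terms in the expansion of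
`(Z(1 - Q))^k` vanish and only the conjugates `Z^{-ℓ} Q Z^ℓ`, `ℓ < k`, survive. At `k = d` the vectors
`Z^{-ℓ}|J⟩` are the Fourier basis, so these conjugates sum to `(1 - i) I`, and
`A₀^d = ω^{-d/4} · i · I = (-i)(i) I = I`. Unitarity: `1 - c P` is unitary for every self-adjoint
projection `P` as soon as `c + c̄ = c c̄`, which holds for `c = 1 - i`.
-/

section Ring

variable {R : Type*} [Ring R] {U V Q : R}

theorem sum_pow_mul_mul_pow_mul_eq (hUV : U * V = 1) (k : ℕ) :
    (∑ ℓ ∈ range k, V ^ ℓ * Q * U ^ ℓ) * U = U * ∑ ℓ ∈ range k, V ^ (ℓ + 1) * Q * U ^ (ℓ + 1) := by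
  rw [sum_mul, mul_sum]
  refine sum_congr rfl fun ℓ _ => ?_
  have hV : U * V ^ (ℓ + 1) = V ^ ℓ := by rw [pow_succ', ← mul_assoc, hUV, one_mul]
  rw [← mul_assoc U, ← mul_assoc U, hV, pow_succ, mul_assoc _ _ U]

theorem pow_mul_one_sub_eq (hUV : U * V = 1) {k : ℕ}
    (hQ : ∀ m, 0 < m → m < k → Q * U ^ m * Q = 0) :
    (U * (1 - Q)) ^ k = U ^ k * (1 - ∑ ℓ ∈ range k, V ^ ℓ * Q * U ^ ℓ) := by
  induction k with
  | zero => simp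
  | succ k ih =>
    set T := ∑ ℓ ∈ range k, V ^ (ℓ + 1) * Q * U ^ (ℓ + 1)
    have hTQ : T * Q = 0 := by
      refine sum_mul .. |>.trans <| sum_eq_zero fun ℓ hℓ => ?_
      rw [mul_assoc, mul_assoc, ← mul_assoc Q, hQ (ℓ + 1) ℓ.succ_pos (by simpa using hℓ),
        mul_zero]
    have hcomm : (1 - ∑ ℓ ∈ range k, V ^ ℓ * Q * U ^ ℓ) * U = U * (1 - T) := by
      rw [sub_mul, mul_sub, one_mul, mul_one, sum_pow_mul_mul_pow_mul_eq hUV]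
    have hsum : ∑ ℓ ∈ range (k + 1), V ^ ℓ * Q * U ^ ℓ = T + Q := by
      rw [sum_range_succ', pow_zero, pow_zero, one_mul, mul_one]
    rw [pow_succ, ih fun m hm hmk => hQ m hm (hmk.trans k.lt_succ_self), hsum]
    calc U ^ k * (1 - ∑ ℓ ∈ range k, V ^ ℓ * Q * U ^ ℓ) * (U * (1 - Q))
        = U ^ (k + 1) * ((1 - T) * (1 - Q)) := by
          rw [pow_succ, mul_assoc, ← mul_assoc _ U, hcomm]; simp only [mul_assoc]
      _ = U ^ (k + 1) * (1 - (T + Q)) := by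
          rw [sub_mul, mul_sub T, hTQ]; noncomm_ring

end Ring

theorem IsIdempotentElem.one_sub_smul_mul_one_sub_smul {𝕜 R : Type*} [CommRing 𝕜] [Ring R]
    [Algebra 𝕜 R] {P : R} (hP : IsIdempotentElem P) (a b : 𝕜) :
    (1 - a • P) * (1 - b • P) = 1 - (a + b - a * b) • P := by
  simp only [mul_sub, sub_mul, mul_one, one_mul, smul_mul_smul_comm, hP.eq]
  module

theorem IsStarProjection.one_sub_smul_mem_unitary {𝕜 R : Type*} [CommRing 𝕜] [StarRing 𝕜]
    [Ring R] [StarRing R] [Algebra 𝕜 R] [StarModule 𝕜 R] {P : R} (hP : IsStarProjection P)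
    {c : 𝕜} (hc : c + star c = c * star c) : 1 - c • P ∈ unitary R := by
  rw [Unitary.mem_iff, star_sub, star_one, star_smul, hP.isSelfAdjoint.star_eq,
    hP.isIdempotentElem.one_sub_smul_mul_one_sub_smul,
    hP.isIdempotentElem.one_sub_smul_mul_one_sub_smul, add_comm (star c), mul_comm (star c), hc]
  simp

theorem Complex.mem_unitary_of_norm_eq_one {z : ℂ} (hz : ‖z‖ = 1) : z ∈ unitary ℂ := by
  rw [Unitary.mem_iff_star_mul_self, star_def, conj_mul', hz]
  simp

/-- The generalized Pauli `Z` for the root of unity `ω`. -/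
noncomputable def clock (ω : ℂ) (d : ℕ) : Matrix (Fin d) (Fin d) ℂ := diagonal fun i => ω ^ (i : ℕ)

/-- `|J⟩⟨J|` for the uniform superposition `J`. -/
noncomputable def uniformProj (d : ℕ) : Matrix (Fin d) (Fin d) ℂ := of fun _ _ => (d : ℂ)⁻¹

theorem vecMulVec_const_inv_sqrt (d : ℕ) :
    (vecMulVec (fun _ => (1 : ℂ) / Real.sqrt d) fun _ => starRingEnd ℂ (1 / Real.sqrt d) :
      Matrix (Fin d) (Fin d) ℂ) = uniformProj d := by
  ext i j
  simp only [uniformProj, vecMulVec_apply, of_apply, one_div, map_inv₀, conj_ofReal]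
  rw [← mul_inv, ← ofReal_mul, Real.mul_self_sqrt d.cast_nonneg, ofReal_natCast]

section Clock

variable {d : ℕ}

theorem clock_one : clock 1 d = 1 := by simp [clock]

theorem clock_mul (x y : ℂ) : clock x d * clock y d = clock (x * y) d := by
  simp [clock, mul_pow]

theorem clock_pow (x : ℂ) (m : ℕ) : clock x d ^ m = clock (x ^ m) d := by
  simp [clock, diagonal_pow, Pi.pow_def, ← pow_mul, mul_comm]

theorem star_clock {ω : ℂ} (hω : ‖ω‖ = 1) : star (clock ω d) = clock ω⁻¹ d := by
  rw [clock, star_eq_conjTranspose, diagonal_conjTranspose, clock, RCLike.inv_eq_conj hω]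
  simp [Pi.star_def]

theorem clock_mem_unitary {ω : ℂ} (hω : ‖ω‖ = 1) : clock ω d ∈ unitary _ := by
  have hω0 : ω ≠ 0 := norm_ne_zero_iff.mp (hω ▸ one_ne_zero)
  rw [Unitary.mem_iff, star_clock hω, clock_mul, clock_mul, inv_mul_cancel₀ hω0,
    mul_inv_cancel₀ hω0, clock_one]
  exact ⟨rfl, rfl⟩

theorem clock_pow_eq_one {ω : ℂ} (hω : ω ^ d = 1) : clock ω d ^ d = 1 := by
  rw [clock_pow, hω, clock_one]

theorem isStarProjection_uniformProj (hd : d ≠ 0) : IsStarProjection (uniformProj d) := by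
  refine ⟨?_, ?_⟩
  · ext i j
    simp only [uniformProj, mul_apply, of_apply, sum_const, card_univ, Fintype.card_fin,
      nsmul_eq_mul]
    field_simp
  · ext i j
    simp [uniformProj]

theorem clock_mul_uniformProj_mul_clock_apply (x y : ℂ) (a b : Fin d) :
    (clock x d * uniformProj d * clock y d) a b = (d : ℂ)⁻¹ * (x ^ (a : ℕ) * y ^ (b : ℕ)) := by
  simp only [clock, uniformProj, mul_diagonal, diagonal_mul, of_apply]
  ring

theorem uniformProj_mul_clock_mul_uniformProj_apply (x : ℂ) (a b : Fin d) :
    (uniformProj d * clock x d * uniformProj d) a b = (d : ℂ)⁻¹ ^ 2 * ∑ j ∈ range d, x ^ j := by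
  rw [mul_apply]
  simp only [clock, uniformProj, mul_diagonal, of_apply]
  rw [Fin.sum_univ_eq_sum_range (fun j => (d : ℂ)⁻¹ * x ^ j * (d : ℂ)⁻¹) d, mul_sum]
  exact sum_congr rfl fun _ _ => by ring

end Clock

theorem geom_sum_eq_zero_of_pow_eq_one {K : Type*} [DivisionRing K] {x : K} {d : ℕ}
    (hx : x ≠ 1) (hxd : x ^ d = 1) : ∑ i ∈ range d, x ^ i = 0 := by
  rw [geom_sum_eq hx, hxd, sub_self, zero_div]

section Fourier

variable {d : ℕ} {ω : ℂ}

theorem uniformProj_mul_clock_pow_mul_uniformProj (hω : IsPrimitiveRoot ω d) {m : ℕ}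
    (hm : 0 < m) (hmd : m < d) : uniformProj d * clock ω d ^ m * uniformProj d = 0 := by
  have hωm : (ω ^ m) ^ d = 1 := by rw [pow_right_comm, hω.pow_eq_one, one_pow]
  ext a b
  rw [clock_pow, uniformProj_mul_clock_mul_uniformProj_apply,
    geom_sum_eq_zero_of_pow_eq_one (hω.pow_ne_one_of_pos_of_lt hm.ne' hmd) hωm, mul_zero,
    Matrix.zero_apply]

theorem sum_clock_inv_pow_mul_uniformProj_mul_clock_pow (hω : IsPrimitiveRoot ω d) :
    ∑ ℓ ∈ range d, clock ω⁻¹ d ^ ℓ * uniformProj d * clock ω d ^ ℓ = 1 := by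
  ext a b
  have hd : d ≠ 0 := a.pos.ne'
  have hω0 : ω ≠ 0 := hω.ne_zero hd
  have hterm (ℓ : ℕ) :
      (ω⁻¹ ^ ℓ) ^ (a : ℕ) * (ω ^ ℓ) ^ (b : ℕ) = (ω⁻¹ ^ (a : ℕ) * ω ^ (b : ℕ)) ^ ℓ := by
    ring
  simp only [Matrix.sum_apply, clock_pow, clock_mul_uniformProj_mul_clock_apply, hterm, ← mul_sum]
  by_cases hab : a = b
  · subst hab
    rw [inv_pow, inv_mul_cancel₀ (pow_ne_zero _ hω0)]
    simp [hd]
  · have hx : ω⁻¹ ^ (a : ℕ) * ω ^ (b : ℕ) ≠ 1 := by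
      rw [Ne, inv_pow, inv_mul_eq_one₀ (pow_ne_zero _ hω0)]
      exact fun h => hab (Fin.ext (hω.pow_inj a.isLt b.isLt h))
    have hxd : (ω⁻¹ ^ (a : ℕ) * ω ^ (b : ℕ)) ^ d = 1 := by
      rw [mul_pow, pow_right_comm, pow_right_comm ω, inv_pow, hω.pow_eq_one, inv_one, one_pow,
        one_pow, one_mul]
    rw [geom_sum_eq_zero_of_pow_eq_one hx hxd, mul_zero, one_apply_ne hab]

end Fourier

theorem Complex.norm_exp_neg_pi_mul_I_div_two_mul (d : ℕ) : ‖exp (-(π * I) / (2 * d))‖ = 1 := by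
  rw [norm_exp, Real.exp_eq_one_iff]
  simp [div_re]

theorem Complex.exp_neg_pi_mul_I_div_two_mul_pow {d : ℕ} (hd : d ≠ 0) :
    exp (-(π * I) / (2 * d)) ^ d = -I := by
  rw [← exp_nat_mul, ← exp_neg_pi_div_two_mul_I]
  congr 1
  field_simp

/-- `A₀ = ω^{−1/4} Z(I − (1−i)|J⟩⟨J|)` is unitary, `A₀^d = I`, and for `1 ≤ k ≤ d`,
`A₀^k = ω^{−k/4} Z^k (I − (1−i)∑_{ℓ<k} Z^{−ℓ}|J⟩⟨J|Z^{ℓ})`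
(with `Z^{-ℓ}` written `(star Z)^ℓ` since `Z` is unitary). -/
theorem A0_powers (d : ℕ) (hd : 2 ≤ d)
    (ω : ℂ) (hω : ω = Complex.exp (2 * Real.pi * I / d))
    (ωq : ℂ) (hωq : ωq = Complex.exp (-(Real.pi * I) / (2 * d)))
    (Z : Matrix (Fin d) (Fin d) ℂ)
    (hZ : Z = Matrix.diagonal fun i : Fin d => ω ^ (i : ℕ))
    (J : Fin d → ℂ) (hJ : J = fun _ => (1 : ℂ) / Real.sqrt d)
    (Jproj : Matrix (Fin d) (Fin d) ℂ)
    (hJproj : Jproj = Matrix.vecMulVec J fun i => (starRingEnd ℂ) (J i))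
    (A₀ : Matrix (Fin d) (Fin d) ℂ)
    (hA₀ : A₀ = ωq • (Z * (1 - (1 - I) • Jproj))) :
    (A₀ * star A₀ = 1 ∧ star A₀ * A₀ = 1) ∧
    A₀ ^ d = 1 ∧
    (∀ k : ℕ, 1 ≤ k → k ≤ d →
      A₀ ^ k = ωq ^ k •
        (Z ^ k * (1 - (1 - I) • ∑ ℓ ∈ Finset.range k, (star Z) ^ ℓ * Jproj * Z ^ ℓ))) := by
  have hd0 : d ≠ 0 := by omega
  have hprim : IsPrimitiveRoot ω d := hω ▸ isPrimitiveRoot_exp d hd0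
  have hnorm : ‖ω‖ = 1 := hprim.norm'_eq_one hd0
  have hP : Jproj = uniformProj d := hJproj ▸ hJ ▸ vecMulVec_const_inv_sqrt d
  change Z = clock ω d at hZ
  subst hZ hP
  have hpow : ∀ k ≤ d, A₀ ^ k = ωq ^ k • (clock ω d ^ k *
      (1 - (1 - I) • ∑ ℓ ∈ range k, star (clock ω d) ^ ℓ * uniformProj d * clock ω d ^ ℓ)) := by
    intro k hk
    have hQ : ∀ m, 0 < m → m < k →
        (1 - I) • uniformProj d * clock ω d ^ m * ((1 - I) • uniformProj d) = 0 := by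
      intro m hm hmk
      rw [smul_mul_assoc, smul_mul_assoc, mul_smul_comm,
        uniformProj_mul_clock_pow_mul_uniformProj hprim hm (hmk.trans_le hk), smul_zero, smul_zero]
    rw [hA₀, smul_pow,
      pow_mul_one_sub_eq (Unitary.mul_star_self_of_mem (clock_mem_unitary hnorm)) hQ, smul_sum]
    simp_rw [mul_smul_comm, smul_mul_assoc]
  have hc : (1 - I) + star (1 - I) = (1 - I) * star (1 - I) := by
    simp [Complex.ext_iff]
  refine ⟨?_, ?_, fun k _ hk => hpow k hk⟩
  · have hA : A₀ ∈ unitary _ := hA₀ ▸ Unitary.smul_mem_of_mem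
      (mem_unitary_of_norm_eq_one (hωq ▸ norm_exp_neg_pi_mul_I_div_two_mul d))
      (mul_mem (clock_mem_unitary hnorm)
        ((isStarProjection_uniformProj hd0).one_sub_smul_mem_unitary hc))
    exact ⟨Unitary.mul_star_self_of_mem hA, Unitary.star_mul_self_of_mem hA⟩
  · rw [hpow d le_rfl, star_clock hnorm, sum_clock_inv_pow_mul_uniformProj_mul_clock_pow hprim,
      clock_pow_eq_one hprim.pow_eq_one, hωq, exp_neg_pi_mul_I_div_two_mul_pow hd0, one_mul,
      show (1 : Matrix (Fin d) (Fin d) ℂ) - (1 - I) • 1 = I • 1 by module, smul_smul, neg_mul,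
      I_mul_I, neg_neg, one_smul]
end

section
/- Let d ≥ 2, ω = exp(2πi/d), Z the generalized Pauli-Z on ℂ^d, |J⟩ the uniform superposition, X the cyclic shift X|i⟩ = |i+1 mod d⟩, and |Φ_d⟩ = (1/√d)∑_{i=0}^{d−1}|i⟩|i⟩. With A₀ = ω^{−1/4}Z(I − (1−i)|J⟩⟨J|), A₁ = ω^{1/4}Z(I − (1+i)|J⟩⟨J|), B₀ = Z, B₁ = ω^{1/2}(I − 2|J⟩⟨J|)Z, and the SATWAP Bell operator O_d = ∑_{k=1}^{d−1}(r_k A₀^k ⊗ B₀^{−k} + conj(r_k)ω^k A₀^k ⊗ B₁^{−k} + conj(r_k) A₁^k ⊗ B₀^{−k} + r_k A₁^k ⊗ B₁^{−k}), one has ⟨Φ_d| O_d |Φ_d⟩ = 2(d−1). -/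
/-!
Group `O_d = ∑_k ∑_s A_s^k ⊗ C_{s,k}` with `C_{0,k} = r_k B₀⁻ᵏ + conj(r_k) ωᵏ B₁⁻ᵏ` and
`C_{1,k} = conj(r_k) B₀⁻ᵏ + r_k B₁⁻ᵏ`. Since `⟨Φ_d| M ⊗ N |Φ_d⟩ = tr (N Mᵀ) / d`, each of the
`2(d - 1)` pairs contributes `tr (C_{s,k} (A_s^k)ᵀ) / d`, which is `1` by the transpose
identities `C_{s,k} (A_s^k)ᵀ = 1`.

For the transpose identities let `P = |J⟩⟨J|` and `Q_k = ∑_{t<k} Zᵗ P Z⁻ᵗ`. The vectors `Zᵗ|J⟩`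
are orthonormal, so `Q_k` is a projection for `k ≤ d`, and
`(Z⁻¹ (1 - c P))^k = Z⁻ᵏ (1 - c Q_k)`, `((1 - c P) Z)^k = (1 - c Q_k) Zᵏ`.
Every phase is a power of `μ = e^{iπ/(2d)}` (`ω = μ⁴`, `r_k = (1 - i)/2 · μᵏ`), and after
cancelling them `C_{s,k} (A_s^k)ᵀ = Z⁻ᵏ (1 - (1 ± i) Q_k) (1 - (1 ∓ i) Q_k) Zᵏ = 1`,
because `(1 + i) + (1 - i) = (1 + i)(1 - i)`.
-/

open Complex Matrix Kronecker Finset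

section Idempotent

variable {𝕜 R : Type*} [CommRing 𝕜] [Ring R] [Algebra 𝕜 R]

lemma one_sub_smul_mul_one_sub_smul_of_mul_eq_zero {S P : R} (h : S * P = 0) (c : 𝕜) :
    (1 - c • S) * (1 - c • P) = 1 - c • (P + S) := by
  simp only [sub_mul, mul_sub, one_mul, mul_one, smul_mul_smul_comm, h, smul_zero, sub_zero,
    smul_add]
  abel

lemma IsIdempotentElem.one_sub_smul_mul_one_sub_smul_s12 {Q : R} (hQ : IsIdempotentElem Q)
    {a b : 𝕜} (hab : a + b = a * b) : (1 - a • Q) * (1 - b • Q) = 1 := by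
  simp only [sub_mul, mul_sub, one_mul, mul_one, smul_mul_smul_comm, hQ.eq, ← hab, add_smul]
  abel

end Idempotent

section OrbitSum

variable {R : Type*} [Ring R] [StarRing R]

def orbitSum (W P : R) (k : ℕ) : R := ∑ t ∈ range k, star W ^ t * P * W ^ t

lemma orbitSum_succ (W P : R) (k : ℕ) :
    orbitSum W P (k + 1) = P + star W * orbitSum W P k * W := by
  simp only [orbitSum, sum_range_succ', pow_zero, one_mul, mul_one, pow_succ' (star W),
    pow_succ W, mul_sum, sum_mul, mul_assoc, add_comm P]

lemma IsSelfAdjoint.orbitSum {P : R} (hP : IsSelfAdjoint P) (W : R) (k : ℕ) :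
    IsSelfAdjoint (orbitSum W P k) :=
  isSelfAdjoint_sum _ fun t _ => by
    simp only [IsSelfAdjoint, star_mul, star_pow, star_star, hP.star_eq, mul_assoc]

lemma conj_orbitSum_mul_eq_zero {W P : R} {k : ℕ}
    (h : ∀ m, 1 ≤ m → m ≤ k → P * W ^ m * P = 0) :
    star W * orbitSum W P k * W * P = 0 := by
  simp only [orbitSum, mul_sum, sum_mul]
  refine sum_eq_zero fun t ht => ?_
  calc star W * (star W ^ t * P * W ^ t) * W * P
      = star W ^ (t + 1) * (P * W ^ (t + 1) * P) := by
        simp only [pow_succ' (star W), pow_succ W, mul_assoc]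
    _ = 0 := by rw [h (t + 1) (by omega) (by rw [mem_range] at ht; omega), mul_zero]

lemma mul_conj_orbitSum_eq_zero {W P : R} {k : ℕ} (hP : IsSelfAdjoint P)
    (h : ∀ m, 1 ≤ m → m ≤ k → P * W ^ m * P = 0) :
    P * (star W * orbitSum W P k * W) = 0 := by
  simpa [mul_assoc, hP.star_eq, (hP.orbitSum W k).star_eq] using
    congrArg star (conj_orbitSum_mul_eq_zero h)

lemma isIdempotentElem_orbitSum {W P : R} (hW : W ∈ unitary R) (hP : IsSelfAdjoint P)
    (hP2 : IsIdempotentElem P) {k : ℕ} (h : ∀ m, 1 ≤ m → m < k → P * W ^ m * P = 0) :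
    IsIdempotentElem (orbitSum W P k) := by
  induction k with
  | zero => simp [orbitSum, IsIdempotentElem]
  | succ k ih =>
    have h' : ∀ m, 1 ≤ m → m ≤ k → P * W ^ m * P = 0 := fun m h1 h2 => h m h1 (by omega)
    have hS : IsIdempotentElem (star W * orbitSum W P k * W) := by
      calc star W * orbitSum W P k * W * (star W * orbitSum W P k * W)
          = star W * (orbitSum W P k * (W * star W) * orbitSum W P k) * W := by
            simp only [mul_assoc]
        _ = _ := by
            rw [Unitary.mul_star_self_of_mem hW, mul_one,
              (ih fun m h1 h2 => h m h1 (by omega)).eq]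
    rw [IsIdempotentElem, orbitSum_succ, add_mul, mul_add, mul_add, hP2.eq, hS.eq,
      conj_orbitSum_mul_eq_zero h', mul_conj_orbitSum_eq_zero hP h', add_zero, zero_add]

variable {𝕜 : Type*} [CommRing 𝕜] [Algebra 𝕜 R]

lemma pow_mul_one_sub_smul {W P : R} (hW : W * star W = 1) (c : 𝕜) {k : ℕ}
    (h : ∀ m, 1 ≤ m → m < k → P * W ^ m * P = 0) :
    (W * (1 - c • P)) ^ k = W ^ k * (1 - c • orbitSum W P k) := by
  induction k with
  | zero => simp [orbitSum]
  | succ k ih =>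
    have hshift : W ^ k * (1 - c • orbitSum W P k) * W
        = W ^ (k + 1) * (1 - c • (star W * orbitSum W P k * W)) := by
      simp only [mul_sub, sub_mul, mul_one, mul_smul_comm, smul_mul_assoc, pow_succ, mul_assoc]
      rw [← mul_assoc W (star W), hW, one_mul]
    rw [pow_succ, ih fun m h1 h2 => h m h1 (by omega), orbitSum_succ, ← mul_assoc, hshift,
      mul_assoc, one_sub_smul_mul_one_sub_smul_of_mul_eq_zero
        (conj_orbitSum_mul_eq_zero (k := k) fun m h1 h2 => h m h1 (by omega))]

lemma pow_one_sub_smul_mul_star [StarRing 𝕜] [StarModule 𝕜 R] {W P : R} (hW : W * star W = 1)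
    (hP : IsSelfAdjoint P) (c : 𝕜) {k : ℕ} (h : ∀ m, 1 ≤ m → m < k → P * W ^ m * P = 0) :
    ((1 - c • P) * star W) ^ k = (1 - c • orbitSum W P k) * star W ^ k := by
  simpa only [star_pow, star_mul, star_sub, star_one, star_smul, star_star, hP.star_eq,
    (hP.orbitSum W k).star_eq] using congrArg star (pow_mul_one_sub_smul hW (star c) h)

lemma smul_pow_add_smul_pow_mul_smul_pow_eq_one [StarRing 𝕜] [StarModule 𝕜 R] {W P : R}
    (hW : W ∈ unitary R) (hP : IsSelfAdjoint P) (hP2 : IsIdempotentElem P) {k : ℕ}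
    (h : ∀ m, 1 ≤ m → m < k → P * W ^ m * P = 0) {a b α β γ : 𝕜}
    (hab : b + a = b * a) (hγ : (α + β) * γ = 1) (hb : 2 * β * γ = b) :
    (α • W ^ k + β • (W * (1 - (2 : 𝕜) • P)) ^ k) * (γ • ((1 - a • P) * star W) ^ k) = 1 := by
  have hWW := Unitary.mul_star_self_of_mem hW
  set Q := orbitSum W P k
  rw [pow_mul_one_sub_smul hWW 2 h, pow_one_sub_smul_mul_star hWW hP a h]
  calc (α • W ^ k + β • (W ^ k * (1 - (2 : 𝕜) • Q))) * (γ • ((1 - a • Q) * star W ^ k))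
      = W ^ k * ((1 - b • Q) * (1 - a • Q)) * star W ^ k := by
        subst hb
        simp only [add_mul, mul_sub, sub_mul, smul_mul_assoc, mul_smul_comm, mul_one,
          one_mul, mul_assoc]
        linear_combination (norm := module)
          hγ • (W ^ k * star W ^ k - a • (W ^ k * (Q * star W ^ k)))
    _ = 1 := by
        rw [(isIdempotentElem_orbitSum hW hP hP2 h).one_sub_smul_mul_one_sub_smul_s12 hab, mul_one,
          ← star_pow]
        exact Unitary.mul_star_self_of_mem (pow_mem hW k)

end OrbitSum

section RankOne

variable {n α : Type*} [Fintype n] [CommSemiring α]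

lemma vecMulVec_mul_mul_vecMulVec (u v : n → α) (X : Matrix n n α) :
    vecMulVec u v * X * vecMulVec u v = (v ⬝ᵥ X *ᵥ u) • vecMulVec u v := by
  rw [vecMulVec_mul, vecMulVec_mul_vecMulVec, dotProduct_mulVec, vecMulVec_smul]

lemma isIdempotentElem_vecMulVec [DecidableEq n] {u v : n → α} (h : v ⬝ᵥ u = 1) :
    IsIdempotentElem (vecMulVec u v) := by
  show _ * _ = _
  simpa [h] using vecMulVec_mul_mul_vecMulVec u v 1

end RankOne

lemma inv_sqrt_mul_inv_sqrt (n : ℕ) :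
    ((Real.sqrt n : ℂ))⁻¹ * (Real.sqrt n : ℂ)⁻¹ = (n : ℂ)⁻¹ := by
  rw [← mul_inv, ← ofReal_mul, Real.mul_self_sqrt (Nat.cast_nonneg _), ofReal_natCast]

section MaxEntangled

noncomputable def maxEntangled (n : Type*) [Fintype n] [DecidableEq n] : n × n → ℂ :=
  ((Real.sqrt (Fintype.card n) : ℂ))⁻¹ • vec (1 : Matrix n n ℂ)

variable {n : Type*} [Fintype n] [DecidableEq n]

lemma star_maxEntangled_dotProduct_kronecker_mulVec (M N : Matrix n n ℂ) :
    star (maxEntangled n) ⬝ᵥ ((M ⊗ₖ N) *ᵥ maxEntangled n) = trace (N * Mᵀ) / Fintype.card n := by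
  simp only [maxEntangled, mulVec_smul, kronecker_mulVec_vec, star_smul, smul_dotProduct,
    dotProduct_smul, star_vec_dotProduct_vec, conjTranspose_one, one_mul, mul_one, smul_eq_mul]
  rw [star_def, map_inv₀, conj_ofReal, ← mul_assoc, inv_sqrt_mul_inv_sqrt, div_eq_inv_mul]

end MaxEntangled

section OrthogonalOrbit

variable {n : Type*} [Fintype n] [DecidableEq n]

/-- With `P = |J⟩⟨J|`, `mul_pow_mul` says that the orbit `J, Z J, …, Z^(card n - 1) J` of the
unit vector `J` is orthonormal. -/
structure IsOrthogonalOrbit (Z P : Matrix n n ℂ) : Prop where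
  unitary : Z ∈ unitary (Matrix n n ℂ)
  transpose_eq : Zᵀ = Z
  isSelfAdjoint : IsSelfAdjoint P
  isIdempotentElem : IsIdempotentElem P
  transpose_proj : Pᵀ = P
  mul_pow_mul : ∀ m, 1 ≤ m → m < Fintype.card n → P * Z ^ m * P = 0

lemma IsOrthogonalOrbit.transpose_identity {Z P : Matrix n n ℂ} (h : IsOrthogonalOrbit Z P)
    {k : ℕ} (hk : k < Fintype.card n) {a b α β l ν : ℂ} (hab : b + a = b * a)
    (hγ : (α + β * star l ^ k) * ν ^ k = 1) (hb : 2 * (β * star l ^ k) * ν ^ k = b) :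
    (α • star Z ^ k + β • star (l • ((1 - (2 : ℂ) • P) * Z)) ^ k) *
      ((ν • (Z * (1 - a • P))) ^ k)ᵀ = 1 := by
  have horth : ∀ m, 1 ≤ m → m < k → P * star Z ^ m * P = 0 := fun m h1 h2 => by
    simpa [mul_assoc, h.isSelfAdjoint.star_eq] using congrArg star (h.mul_pow_mul m h1 (by omega))
  have hB : star (l • ((1 - (2 : ℂ) • P) * Z)) ^ k
      = star l ^ k • (star Z * (1 - (2 : ℂ) • P)) ^ k := by
    rw [star_smul, star_mul, star_sub, star_one, star_smul, h.isSelfAdjoint.star_eq, smul_pow]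
    simp
  have hA : ((ν • (Z * (1 - a • P))) ^ k)ᵀ = ν ^ k • ((1 - a • P) * star (star Z)) ^ k := by
    rw [transpose_pow, transpose_smul, transpose_mul, transpose_sub, transpose_one,
      transpose_smul, h.transpose_proj, h.transpose_eq, star_star, smul_pow]
  rw [hB, hA, smul_smul]
  exact smul_pow_add_smul_pow_mul_smul_pow_eq_one (Unitary.star_mem h.unitary) h.isSelfAdjoint
    h.isIdempotentElem horth hab hγ hb

end OrthogonalOrbit

lemma vecMulVec_const_mul_diagonal_pow_mul_eq_zero {d : ℕ} {ζ : ℂ} (hζ : IsPrimitiveRoot ζ d)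
    (a b : ℂ) {m : ℕ} (hm0 : m ≠ 0) (hmd : m < d) :
    vecMulVec (fun _ : Fin d => a) (fun _ => b) * diagonal (fun i : Fin d => ζ ^ (i : ℕ)) ^ m *
      vecMulVec (fun _ => a) (fun _ => b) = 0 := by
  have hsum : ∑ i : Fin d, (ζ ^ (i : ℕ)) ^ m = 0 := by
    simp_rw [← pow_mul, mul_comm _ m, pow_mul]
    rw [Fin.sum_univ_eq_sum_range (fun i => (ζ ^ m) ^ i),
      geom_sum_eq (hζ.pow_ne_one_of_pos_of_lt hm0 hmd), pow_right_comm, hζ.pow_eq_one,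
      one_pow, sub_self, zero_div]
  rw [vecMulVec_mul_mul_vecMulVec, diagonal_pow]
  simp [dotProduct, mulVec_diagonal, ← mul_sum, ← sum_mul, hsum]

lemma diagonal_pow_mem_unitary {d : ℕ} {ζ : ℂ} (hζ : IsPrimitiveRoot ζ d) :
    diagonal (fun i : Fin d => ζ ^ (i : ℕ)) ∈ unitary (Matrix (Fin d) (Fin d) ℂ) := by
  rcases Nat.eq_zero_or_pos d with rfl | hd
  · rw [Subsingleton.elim (diagonal _) 1]
    exact one_mem _
  rw [← Matrix.unitaryGroup, mem_unitaryGroup_iff, star_eq_conjTranspose, diagonal_conjTranspose,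
    diagonal_mul_diagonal, ← diagonal_one]
  congr 1; funext i
  rw [Pi.star_apply, star_def, mul_conj', norm_pow, hζ.norm'_eq_one hd.ne']
  simp

lemma isOrthogonalOrbit_clock {d : ℕ} (hd : d ≠ 0) {ζ : ℂ} (hζ : IsPrimitiveRoot ζ d) :
    IsOrthogonalOrbit (diagonal fun i : Fin d => ζ ^ (i : ℕ))
      (vecMulVec (fun _ => (1 : ℂ) / Real.sqrt d) fun _ => starRingEnd ℂ (1 / Real.sqrt d)) := by
  set J : Fin d → ℂ := fun _ => 1 / Real.sqrt d
  have hc : starRingEnd ℂ (1 / Real.sqrt d) = 1 / Real.sqrt d := by simp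
  have hJ : star J = J := funext fun _ => hc
  have hJJ : J ⬝ᵥ J = 1 := by simp [J, dotProduct, inv_sqrt_mul_inv_sqrt, hd]
  rw [hc]
  refine ⟨diagonal_pow_mem_unitary hζ, diagonal_transpose _, ?_, isIdempotentElem_vecMulVec hJJ,
    transpose_vecMulVec _ _, fun m h1 h2 =>
      vecMulVec_const_mul_diagonal_pow_mul_eq_zero hζ _ _ (by omega) (by simpa using h2)⟩
  rw [IsSelfAdjoint, star_eq_conjTranspose, conjTranspose_vecMulVec, hJ]

section Phases

lemma exp_two_pi_I_div_eq_pow (d : ℕ) :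
    exp (2 * Real.pi * I / d) = exp (Real.pi * I / (2 * d)) ^ 4 := by
  rw [← exp_nat_mul]; congr 1; push_cast; ring

lemma exp_pi_I_div_eq_sq (d : ℕ) : exp (Real.pi * I / d) = exp (Real.pi * I / (2 * d)) ^ 2 := by
  rw [← exp_nat_mul]; congr 1; push_cast; ring

lemma exp_neg_pi_I_div_eq_inv (d : ℕ) :
    exp (-(Real.pi * I) / (2 * d)) = (exp (Real.pi * I / (2 * d)))⁻¹ := by
  rw [← exp_neg, neg_div]

lemma star_exp_pi_I_div (d : ℕ) :
    star (exp (Real.pi * I / (2 * d))) = (exp (Real.pi * I / (2 * d)))⁻¹ := by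
  rw [← exp_neg, star_def, ← exp_conj]; congr 1
  simp only [map_div₀, map_mul, conj_ofReal, conj_I, map_ofNat, map_natCast]
  ring

lemma satwap_coeff_eq {d : ℕ} (hd : d ≠ 0) (k : ℕ) :
    (1 / Real.sqrt 2) * exp (2 * Real.pi * I * (2 * (k : ℂ) - d) / (8 * d))
      = (1 - I) / 2 * exp (Real.pi * I / (2 * d)) ^ k := by
  have harg : 2 * (Real.pi : ℂ) * I * (2 * (k : ℂ) - d) / (8 * d)
      = k * (Real.pi * I / (2 * d)) + ↑(-(Real.pi / 4)) * I := by
    push_cast; field_simp; ring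
  rw [harg, exp_add, exp_nat_mul, exp_mul_I, ← ofReal_cos, ← ofReal_sin, Real.cos_neg,
    Real.sin_neg, Real.cos_pi_div_four, Real.sin_pi_div_four]
  push_cast
  field_simp
  ring

end Phases

section Rounds

variable {n : Type*} [Fintype n] [DecidableEq n] {Z P : Matrix n n ℂ} {k : ℕ} {μ : ℂ}

lemma IsOrthogonalOrbit.satwap_round_zero (h : IsOrthogonalOrbit Z P) (hk : k < Fintype.card n)
    (hμ0 : μ ≠ 0) (hμ : star μ = μ⁻¹) :
    (((1 - I) / 2 * μ ^ k) • star Z ^ k + (starRingEnd ℂ ((1 - I) / 2 * μ ^ k) * (μ ^ 4) ^ k) •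
      star (μ ^ 2 • ((1 - (2 : ℂ) • P) * Z)) ^ k) * ((μ⁻¹ • (Z * (1 - (1 - I) • P))) ^ k)ᵀ = 1 := by
  refine h.transpose_identity hk (b := 1 + I) ?_ ?_ ?_
  · linear_combination I_sq
  all_goals
    simp only [← star_def, star_mul, star_pow, hμ, star_div₀, star_sub, star_one, star_ofNat,
      show star I = -I from conj_I, ← pow_mul, inv_pow]
    field_simp
    ring_nf

lemma IsOrthogonalOrbit.satwap_round_one (h : IsOrthogonalOrbit Z P) (hk : k < Fintype.card n)
    (hμ0 : μ ≠ 0) (hμ : star μ = μ⁻¹) :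
    (starRingEnd ℂ ((1 - I) / 2 * μ ^ k) • star Z ^ k + ((1 - I) / 2 * μ ^ k) •
      star (μ ^ 2 • ((1 - (2 : ℂ) • P) * Z)) ^ k) * ((μ • (Z * (1 - (1 + I) • P))) ^ k)ᵀ = 1 := by
  refine h.transpose_identity hk (b := 1 - I) ?_ ?_ ?_
  · linear_combination I_sq
  all_goals
    simp only [← star_def, star_mul, star_pow, hμ, star_div₀, star_sub, star_one, star_ofNat,
      show star I = -I from conj_I, ← pow_mul, inv_pow]
    field_simp
    ring_nf

end Rounds

-- `(star X) ^ k` encodes `X^{-k}`: all four observables are unitary.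
/-- The ideal SATWAP strategy: with `A₀ = ω^{−1/4}Z(I−(1−i)|J⟩⟨J|)`,
`A₁ = ω^{1/4}Z(I−(1+i)|J⟩⟨J|)`, `B₀ = Z`, `B₁ = ω^{1/2}(I−2|J⟩⟨J|)Z` and the
maximally entangled state `|Φ_d⟩`, one has `⟨Φ_d|O_d|Φ_d⟩ = 2(d−1)`.
Negative powers `X^{−k}` are written `(star X)^k` (all four observables are unitary). -/
theorem satwap_optimal_value (d : ℕ) (hd : 2 ≤ d)
    (ω : ℂ) (hω : ω = Complex.exp (2 * Real.pi * I / d))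
    (r : ℕ → ℂ)
    (hr : ∀ k, r k = (1 / Real.sqrt 2) *
      Complex.exp (2 * Real.pi * I * (2 * (k : ℂ) - d) / (8 * d)))
    (Z : Matrix (Fin d) (Fin d) ℂ)
    (hZ : Z = Matrix.diagonal fun i : Fin d => ω ^ (i : ℕ))
    (J : Fin d → ℂ) (hJ : J = fun _ => (1 : ℂ) / Real.sqrt d)
    (Jproj : Matrix (Fin d) (Fin d) ℂ)
    (hJproj : Jproj = Matrix.vecMulVec J fun i => (starRingEnd ℂ) (J i))
    (A₀ A₁ B₀ B₁ : Matrix (Fin d) (Fin d) ℂ)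
    (hA₀ : A₀ = Complex.exp (-(Real.pi * I) / (2 * d)) • (Z * (1 - (1 - I) • Jproj)))
    (hA₁ : A₁ = Complex.exp (Real.pi * I / (2 * d)) • (Z * (1 - (1 + I) • Jproj)))
    (hB₀ : B₀ = Z)
    (hB₁ : B₁ = Complex.exp (Real.pi * I / d) • ((1 - (2 : ℂ) • Jproj) * Z))
    (Od : Matrix (Fin d × Fin d) (Fin d × Fin d) ℂ)
    (hOd : Od = ∑ k ∈ Finset.Icc 1 (d - 1),
      (r k • ((A₀ ^ k) ⊗ₖ ((star B₀) ^ k)) +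
       ((starRingEnd ℂ) (r k) * ω ^ k) • ((A₀ ^ k) ⊗ₖ ((star B₁) ^ k)) +
       (starRingEnd ℂ) (r k) • ((A₁ ^ k) ⊗ₖ ((star B₀) ^ k)) +
       r k • ((A₁ ^ k) ⊗ₖ ((star B₁) ^ k))))
    (Φ : Fin d × Fin d → ℂ)
    (hΦ : Φ = fun p => if p.1 = p.2 then (1 : ℂ) / Real.sqrt d else 0) :
    ∑ p, (starRingEnd ℂ) (Φ p) * Od.mulVec Φ p = 2 * ((d : ℂ) - 1) := by
  have hd0 : d ≠ 0 := by omega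
  have hpair : IsOrthogonalOrbit Z Jproj := by
    subst hZ hJproj hJ hω
    exact isOrthogonalOrbit_clock hd0 (isPrimitiveRoot_exp d hd0)
  have hΦ' : Φ = maxEntangled (Fin d) := by
    subst hΦ; funext p; simp [maxEntangled, one_apply, eq_comm]
  have hr' : r = fun k => (1 - I) / 2 * exp (Real.pi * I / (2 * d)) ^ k :=
    funext fun k => (hr k).trans (satwap_coeff_eq hd0 k)
  rw [exp_neg_pi_I_div_eq_inv] at hA₀
  rw [exp_pi_I_div_eq_sq] at hB₁
  rw [exp_two_pi_I_div_eq_pow] at hω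
  change star Φ ⬝ᵥ (Od *ᵥ Φ) = _
  subst hr' hω hA₀ hA₁ hB₀ hB₁ hOd hΦ'
  simp only [sum_mulVec, add_mulVec, smul_mulVec, dotProduct_sum, dotProduct_add, dotProduct_smul,
    star_maxEntangled_dotProduct_kronecker_mulVec, smul_eq_mul, Fintype.card_fin]
  rw [show 2 * ((d : ℂ) - 1) = ∑ k ∈ Icc 1 (d - 1), (2 : ℂ) by
    rw [sum_const, Nat.card_Icc, nsmul_eq_mul, mul_comm]
    norm_num [Nat.cast_sub (by omega : 1 ≤ d)]]
  refine sum_congr rfl fun k hk => ?_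
  have hkd : k < Fintype.card (Fin d) := by rw [mem_Icc] at hk; rw [Fintype.card_fin]; omega
  have h₀ := congrArg trace (hpair.satwap_round_zero hkd (exp_ne_zero _) (star_exp_pi_I_div d))
  have h₁ := congrArg trace (hpair.satwap_round_one hkd (exp_ne_zero _) (star_exp_pi_I_div d))
  simp only [add_mul, smul_mul_assoc, trace_add, trace_smul, trace_one, smul_eq_mul,
    Fintype.card_fin] at h₀ h₁
  simp only [← mul_div_assoc, ← add_div]
  rw [div_eq_iff (Nat.cast_ne_zero.2 hd0)]
  linear_combination h₀ + h₁
end
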